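/- arXiv:2112.14418 — 2 statements merged into one kernel-verified Lean document; each statement's English description precedes it below -/
import Mathlib

section
/- For Legendre polynomials and integers n > j-1 ≥ 1, ∫_{-1}^{1} (L_n'(z) + L_{n-1}'(z)) (L_{j-1}(z) - L_{j-2}(z)) dz = 0. -/
/-!
For the Legendre operator `L p = ((X² - 1) p')'` the Legendre polynomials satisfy
`L Pₙ = n (n + 1) Pₙ`, and `L` is symmetric for `∫_{-1}^{1}` because `X² - 1` vanishes at `±1`.
Since `L (X^d) = d (d + 1) X^d - d (d - 1) X^(d-2)`, comparing eigenvalues shows by induction on `d`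
that `Pₙ` is orthogonal to every polynomial of degree `< n`. Integrating the theorem's integrand by
parts, the boundary terms vanish by `Pₙ(±1) = (±1)ⁿ`, and what remains pairs `Pₙ + Pₙ₋₁` with
`(P_{j-1} - P_{j-2})'`, of degree `≤ j - 2 < n - 1`.
-/

open intervalIntegral MeasureTheory

noncomputable def legendre : ℕ → ℝ → ℝ
  | 0 => fun _ => 1
  | 1 => fun z => z
  | (n + 2) => fun z =>
      ((2 * (n : ℝ) + 3) * z * legendre (n + 1) z - ((n : ℝ) + 1) * legendre n z) / ((n : ℝ) + 2)

open Polynomial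

noncomputable def legendrePoly : ℕ → ℝ[X]
  | 0 => 1
  | 1 => X
  | (n + 2) => C ((n + 2 : ℝ)⁻¹) *
      ((2 * n + 3 : ℝ[X]) * X * legendrePoly (n + 1) - (n + 1 : ℝ[X]) * legendrePoly n)

theorem eval_legendrePoly : ∀ (n : ℕ) (z : ℝ), (legendrePoly n).eval z = legendre n z
  | 0, _ => by simp [legendrePoly, legendre]
  | 1, _ => by simp [legendrePoly, legendre]
  | n + 2, z => by
    simp [legendrePoly, legendre, eval_legendrePoly n, eval_legendrePoly (n + 1), div_eq_inv_mul]

theorem legendrePoly_recurrence (n : ℕ) :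
    (n + 2 : ℝ[X]) * legendrePoly (n + 2) =
      (2 * n + 3 : ℝ[X]) * X * legendrePoly (n + 1) - (n + 1 : ℝ[X]) * legendrePoly n := by
  have hC : C (n + 2 : ℝ) = (n + 2 : ℝ[X]) := by rw [map_add, map_natCast, map_ofNat]
  rw [legendrePoly, ← mul_assoc, ← hC, ← C_mul,
    mul_inv_cancel₀ (by positivity), C_1, one_mul]

theorem legendrePoly_eval_one : ∀ n : ℕ, (legendrePoly n).eval 1 = 1
  | 0 => by simp [legendrePoly]
  | 1 => by simp [legendrePoly]
  | n + 2 => by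
    simp only [legendrePoly, eval_mul, eval_sub, eval_add, eval_C, eval_X, eval_natCast,
      eval_ofNat, eval_one, legendrePoly_eval_one n, legendrePoly_eval_one (n + 1)]
    field_simp
    ring

theorem legendrePoly_eval_neg_one : ∀ n : ℕ, (legendrePoly n).eval (-1) = (-1) ^ n
  | 0 => by simp [legendrePoly]
  | 1 => by simp [legendrePoly]
  | n + 2 => by
    simp only [legendrePoly, eval_mul, eval_sub, eval_add, eval_C, eval_X, eval_natCast,
      eval_ofNat, eval_one, legendrePoly_eval_neg_one n, legendrePoly_eval_neg_one (n + 1)]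
    field_simp
    ring

theorem natDegree_legendrePoly_le : ∀ n : ℕ, (legendrePoly n).natDegree ≤ n
  | 0 => by simp [legendrePoly]
  | 1 => by simp [legendrePoly]
  | n + 2 => by
    have h1 := natDegree_legendrePoly_le (n + 1)
    have h0 := natDegree_legendrePoly_le n
    rw [legendrePoly]
    refine (natDegree_C_mul_le _ _).trans ((natDegree_sub_le _ _).trans (max_le ?_ ?_))
    · compute_degree
      omega
    · compute_degree
      omega

theorem derivative_legendrePoly_succ (n : ℕ) :
    derivative (legendrePoly (n + 1)) =
      X * derivative (legendrePoly n) + (n + 1 : ℝ[X]) * legendrePoly n ∧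
    X * derivative (legendrePoly (n + 1)) - derivative (legendrePoly n) =
      (n + 1 : ℝ[X]) * legendrePoly (n + 1) := by
  induction n with
  | zero => simp [legendrePoly]
  | succ n ih =>
    obtain ⟨hA, hB⟩ := ih
    have hrec := legendrePoly_recurrence n
    have hd := congrArg derivative hrec
    simp only [derivative_mul, derivative_add, derivative_natCast, derivative_ofNat, add_zero,
      zero_mul, zero_add, derivative_sub, mul_zero, derivative_X, mul_one, derivative_one] at hd
    have hA' : derivative (legendrePoly (n + 2)) =
        X * derivative (legendrePoly (n + 1)) + (n + 2 : ℝ[X]) * legendrePoly (n + 1) := by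
      apply mul_left_cancel₀ (show (n + 2 : ℝ[X]) ≠ 0 by exact_mod_cast (by omega : n + 2 ≠ 0))
      linear_combination hd + (n + 1 : ℝ[X]) * hB
    push_cast
    exact ⟨by linear_combination hA', by linear_combination X * hA' + X * hB - hA - hrec⟩

noncomputable def legendreOp (p : ℝ[X]) : ℝ[X] := derivative ((X ^ 2 - 1) * derivative p)

theorem legendreOp_legendrePoly (n : ℕ) :
    legendreOp (legendrePoly n) = C ((n : ℝ) * (n + 1)) * legendrePoly n := by
  cases n with
  | zero => simp [legendreOp, legendrePoly]
  | succ n =>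
    obtain ⟨hA, hB⟩ := derivative_legendrePoly_succ n
    have hfirst : (X ^ 2 - 1) * derivative (legendrePoly (n + 1)) =
        (n + 1 : ℝ[X]) * (X * legendrePoly (n + 1) - legendrePoly n) := by
      linear_combination X * hB - hA
    rw [legendreOp, hfirst]
    simp only [derivative_mul, derivative_sub, derivative_X, derivative_natCast,
      derivative_one, map_mul, map_add, map_natCast, map_one]
    push_cast
    linear_combination (n + 1 : ℝ[X]) * hB

theorem legendreOp_one : legendreOp 1 = 0 := by simp [legendreOp]

theorem legendreOp_X : legendreOp X = C 2 * X := by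
  simp [legendreOp, one_add_one_eq_two]

theorem legendreOp_X_pow_add_two (d : ℕ) :
    legendreOp (X ^ (d + 2)) =
      C (((d : ℝ) + 2) * (d + 3)) * X ^ (d + 2) - C (((d : ℝ) + 2) * (d + 1)) * X ^ d := by
  simp only [legendreOp, derivative_X_pow_succ, Nat.cast_add, Nat.cast_one, map_add, map_natCast,
    map_one, derivative_mul, derivative_sub, pow_one, derivative_one, sub_zero,
    derivative_natCast, add_zero, zero_mul, zero_add, map_mul, map_ofNat]
  ring

noncomputable def integralNegOneOne : ℝ[X] →ₗ[ℝ] ℝ where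
  toFun p := ∫ z in (-1 : ℝ)..1, p.eval z
  map_add' p q := by
    simp only [eval_add]
    exact integral_add (p.continuous.intervalIntegrable _ _) (q.continuous.intervalIntegrable _ _)
  map_smul' c p := by
    simp only [eval_smul, smul_eq_mul, RingHom.id_apply]
    exact integral_const_mul c _

theorem integralNegOneOne_apply (p : ℝ[X]) :
    integralNegOneOne p = ∫ z in (-1 : ℝ)..1, p.eval z := rfl

theorem integralNegOneOne_derivative (p : ℝ[X]) :
    integralNegOneOne (derivative p) = p.eval 1 - p.eval (-1) :=
  integral_eq_sub_of_hasDerivAt (fun x _ => p.hasDerivAt x)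
    (p.derivative.continuous.intervalIntegrable _ _)

theorem integralNegOneOne_legendreOp_mul (p q : ℝ[X]) :
    integralNegOneOne (legendreOp p * q) = integralNegOneOne (p * legendreOp q) := by
  have hW : derivative ((X ^ 2 - 1) * (derivative p * q - p * derivative q)) =
      legendreOp p * q - p * legendreOp q := by
    simp only [legendreOp, derivative_mul, derivative_sub]
    ring
  have h := integralNegOneOne_derivative ((X ^ 2 - 1) * (derivative p * q - p * derivative q))
  rw [hW, map_sub] at h
  simpa [sub_eq_zero] using h

theorem integralNegOneOne_legendrePoly_mul_legendreOp (n : ℕ) (q : ℝ[X]) :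
    integralNegOneOne (legendrePoly n * legendreOp q) =
      n * (n + 1) * integralNegOneOne (legendrePoly n * q) := by
  rw [← integralNegOneOne_legendreOp_mul, legendreOp_legendrePoly, mul_assoc, ← smul_eq_C_mul,
    map_smul, smul_eq_mul]

theorem integralNegOneOne_legendrePoly_mul_X_pow {n : ℕ} :
    ∀ {d : ℕ}, d < n → integralNegOneOne (legendrePoly n * X ^ d) = 0
  | 0, hn => by
    have h := integralNegOneOne_legendrePoly_mul_legendreOp n 1
    rw [legendreOp_one, mul_zero, map_zero] at h
    have : (n : ℝ) * (n + 1) ≠ 0 := by positivity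
    simpa [this] using h.symm
  | 1, hn => by
    have h := integralNegOneOne_legendrePoly_mul_legendreOp n X
    rw [legendreOp_X, mul_left_comm, ← smul_eq_C_mul, map_smul, smul_eq_mul] at h
    have hn' : (2 : ℝ) ≤ n := by exact_mod_cast hn
    have : (n : ℝ) * (n + 1) - 2 ≠ 0 := by nlinarith
    rw [pow_one]
    exact (mul_eq_zero.mp (by linear_combination -h)).resolve_left this
  | d + 2, hn => by
    have h := integralNegOneOne_legendrePoly_mul_legendreOp n (X ^ (d + 2))
    have ih := integralNegOneOne_legendrePoly_mul_X_pow (n := n) (d := d) (by omega)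
    rw [legendreOp_X_pow_add_two, mul_sub, mul_left_comm, mul_left_comm (legendrePoly n),
      ← smul_eq_C_mul, ← smul_eq_C_mul, map_sub, map_smul, map_smul, ih, smul_eq_mul,
      smul_zero, sub_zero] at h
    have hn' : (d : ℝ) + 3 ≤ n := by exact_mod_cast hn
    have : (n : ℝ) * (n + 1) - (d + 2) * (d + 3) ≠ 0 := by nlinarith
    exact (mul_eq_zero.mp (by linear_combination -h)).resolve_left this

theorem integralNegOneOne_legendrePoly_mul {n : ℕ} {q : ℝ[X]} (hq : q.natDegree < n) :
    integralNegOneOne (legendrePoly n * q) = 0 := by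
  rw [q.as_sum_range_C_mul_X_pow' hq, Finset.mul_sum, map_sum]
  refine Finset.sum_eq_zero fun i hi => ?_
  rw [mul_left_comm, ← smul_eq_C_mul, map_smul,
    integralNegOneOne_legendrePoly_mul_X_pow (Finset.mem_range.mp hi), smul_zero]

theorem deriv_legendre (n : ℕ) (z : ℝ) :
    deriv (legendre n) z = (derivative (legendrePoly n)).eval z := by
  rw [← funext (eval_legendrePoly n), Polynomial.deriv]

theorem stmt2 (j n : ℕ) (hj : 2 ≤ j) (hn : j - 1 < n) :
    ∫ z in (-1:ℝ)..1,
      (deriv (legendre n) z + deriv (legendre (n - 1)) z) *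
        (legendre (j - 1) z - legendre (j - 2) z) = 0 := by
  obtain ⟨k, rfl⟩ : ∃ k, j = k + 2 := ⟨j - 2, by omega⟩
  obtain ⟨m, rfl⟩ : ∃ m, n = m + 1 := ⟨n - 1, by omega⟩
  simp only [Nat.add_sub_cancel, deriv_legendre, ← eval_legendrePoly]
  set f := legendrePoly (m + 1) + legendrePoly m
  set g := legendrePoly (k + 1) - legendrePoly k
  have hboundary : (f * g).eval 1 - (f * g).eval (-1) = 0 := by
    simp [f, g, legendrePoly_eval_one, legendrePoly_eval_neg_one, pow_succ]
  have hdeg : (derivative g).natDegree ≤ k :=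
    (natDegree_derivative_le g).trans <| Nat.sub_le_of_le_add <|
      (natDegree_sub_le _ _).trans <|
        max_le (natDegree_legendrePoly_le _) ((natDegree_legendrePoly_le _).trans k.le_succ)
  calc _ = integralNegOneOne (derivative (f * g) - f * derivative g) := by
        simp [integralNegOneOne_apply, derivative_mul, f, g]
    _ = 0 := by
      rw [map_sub, integralNegOneOne_derivative, hboundary, add_mul, map_add,
        integralNegOneOne_legendrePoly_mul (by omega),
        integralNegOneOne_legendrePoly_mul (by omega)]
      ring
end

section
/- Let T > 0 and f ∈ C^2([0,T]). For every integer n ≥ 2, |∫_0^T f(t) L_n(2t/T − 1) dt| ≤ 4 (T/(4n+2))^2 ∫_0^T |f''(t)| dt. -/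
open intervalIntegral MeasureTheory

open Polynomial

noncomputable def Leg : ℕ → Polynomial ℝ
  | 0 => 1
  | 1 => X
  | (n + 2) => C ((2 * (n : ℝ) + 3) / ((n : ℝ) + 2)) * X * Leg (n + 1)
      - C (((n : ℝ) + 1) / ((n : ℝ) + 2)) * Leg n

lemma leg_eval : ∀ (n : ℕ) (x : ℝ), legendre n x = (Leg n).eval x
  | 0, x => by simp [legendre, Leg]
  | 1, x => by simp [legendre, Leg]
  | (n + 2), x => by
    have h1 := leg_eval (n + 1) x
    have h2 := leg_eval n x
    have hne : ((n : ℝ) + 2) ≠ 0 := by positivity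
    simp only [legendre, Leg, eval_sub, eval_mul, eval_C, eval_X, h1, h2]
    field_simp

lemma leg_rec (n : ℕ) : ((n : Polynomial ℝ) + 2) * Leg (n + 2)
    = (2 * (n : Polynomial ℝ) + 3) * (X * Leg (n + 1)) - ((n : Polynomial ℝ) + 1) * Leg n := by
  have hne : ((n : ℝ) + 2) ≠ 0 := by positivity
  have h1 : ((n : Polynomial ℝ) + 2) = C ((n : ℝ) + 2) := by
    simp [map_add, map_natCast, map_ofNat]
  have h2 : (2 * (n : Polynomial ℝ) + 3) = C (2 * (n : ℝ) + 3) := by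
    simp [map_add, map_mul, map_natCast, map_ofNat]
  have h3 : ((n : Polynomial ℝ) + 1) = C ((n : ℝ) + 1) := by
    simp [map_add, map_natCast, map_ofNat]
  have e1 : ((n : ℝ) + 2) * ((2 * (n : ℝ) + 3) / ((n : ℝ) + 2)) = 2 * (n : ℝ) + 3 := by
    field_simp
  have e2 : ((n : ℝ) + 2) * (((n : ℝ) + 1) / ((n : ℝ) + 2)) = (n : ℝ) + 1 := by
    field_simp
  rw [Leg, h1, h2, h3, mul_sub]
  congr 1
  · rw [← mul_assoc, ← mul_assoc, ← C_mul, e1, mul_assoc]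
  · rw [← mul_assoc, ← C_mul, e2]
lemma natC_ne (c : ℝ) (hc : c ≠ 0) : (C c : Polynomial ℝ) ≠ 0 := by
  simpa using hc

lemma leg_GH (n : ℕ) :
    derivative (Leg (n + 1)) = X * derivative (Leg n) + ((n : Polynomial ℝ) + 1) * Leg n ∧
    X * derivative (Leg (n + 1)) - derivative (Leg n) = ((n : Polynomial ℝ) + 1) * Leg (n + 1) := by
  induction n with
  | zero => constructor <;> simp [Leg]
  | succ n ih =>
    obtain ⟨ihG, ihH⟩ := ih
    have dRec := congrArg derivative (leg_rec n)
    simp only [derivative_mul, derivative_add, derivative_sub, derivative_natCast,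
      derivative_ofNat, derivative_X, derivative_one, zero_mul, mul_zero, zero_add, add_zero,
      mul_one, one_mul] at dRec
    have hC : ((n : Polynomial ℝ) + 2) ≠ 0 := by
      have h1 : ((n : Polynomial ℝ) + 2) = C ((n : ℝ) + 2) := by
        simp [map_add, map_natCast, map_ofNat]
      rw [h1]
      exact natC_ne _ (by positivity)
    have G2 : derivative (Leg (n + 2))
        = X * derivative (Leg (n + 1)) + ((n : Polynomial ℝ) + 2) * Leg (n + 1) := by
      apply mul_left_cancel₀ hC
      linear_combination dRec + ((n : Polynomial ℝ) + 1) * ihH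
    have H2 : X * derivative (Leg (n + 2)) - derivative (Leg (n + 1))
        = ((n : Polynomial ℝ) + 2) * Leg (n + 2) := by
      linear_combination X * G2 - ihG + X * ihH - leg_rec n
    refine ⟨?_, ?_⟩
    · push_cast
      linear_combination G2
    · push_cast
      linear_combination H2

lemma legG (n : ℕ) : derivative (Leg (n + 1))
    = X * derivative (Leg n) + ((n : Polynomial ℝ) + 1) * Leg n := (leg_GH n).1

lemma legH (n : ℕ) : X * derivative (Leg (n + 1)) - derivative (Leg n)
    = ((n : Polynomial ℝ) + 1) * Leg (n + 1) := (leg_GH n).2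

lemma pearson (n : ℕ) : derivative (Leg (n + 2)) - derivative (Leg n)
    = (2 * (n : Polynomial ℝ) + 3) * Leg (n + 1) := by
  have G' := legG (n + 1)
  push_cast at G'
  linear_combination G' + legH n

lemma formA (n : ℕ) : (X ^ 2 - 1) * derivative (Leg n)
    = ((n : Polynomial ℝ) + 1) * (Leg (n + 1) - X * Leg n) := by
  linear_combination legH n - X * legG n

lemma formC (n : ℕ) : (2 * (n : Polynomial ℝ) + 3) * ((X ^ 2 - 1) * derivative (Leg (n + 1)))
    = (((n : Polynomial ℝ) + 1) * ((n : Polynomial ℝ) + 2)) * (Leg (n + 2) - Leg n) := by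
  have G' := legG (n + 1)
  have H' := legH (n + 1)
  push_cast at G' H'
  linear_combination ((n : Polynomial ℝ) + 1) * H' - ((n : Polynomial ℝ) + 1) * X * G'
    + ((n : Polynomial ℝ) + 2) * X * legH n - ((n : Polynomial ℝ) + 2) * legG n

lemma legODE (n : ℕ) : 2 * X * derivative (Leg n) + (X ^ 2 - 1) * derivative (derivative (Leg n))
    = ((n : Polynomial ℝ) * ((n : Polynomial ℝ) + 1)) * Leg n := by
  have dAux := congrArg derivative (formA n)
  simp only [derivative_mul, derivative_add, derivative_sub, derivative_natCast,
    derivative_ofNat, derivative_X, derivative_one, derivative_X_pow, zero_mul, mul_zero,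
    zero_add, add_zero, mul_one, one_mul, Nat.cast_ofNat, pow_one, map_ofNat] at dAux
  linear_combination dAux + ((n : Polynomial ℝ) + 1) * legG n
lemma leg_eval_one : ∀ n : ℕ, (Leg n).eval 1 = 1
  | 0 => by simp [Leg]
  | 1 => by norm_num [Leg]
  | (n + 2) => by
    have e := congrArg (eval 1) (leg_rec n)
    simp only [eval_mul, eval_add, eval_sub, eval_natCast, eval_ofNat, eval_X, eval_one,
      leg_eval_one (n + 1), leg_eval_one n, mul_one] at e
    have hne : ((n : ℝ) + 2) ≠ 0 := by positivity
    apply mul_left_cancel₀ hne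
    rw [mul_one]
    linarith [e]

lemma leg_eval_neg_one : ∀ n : ℕ, (Leg n).eval (-1) = (-1) ^ n
  | 0 => by simp [Leg]
  | 1 => by simp [Leg]
  | (n + 2) => by
    have e := congrArg (eval (-1)) (leg_rec n)
    simp only [eval_mul, eval_add, eval_sub, eval_natCast, eval_ofNat, eval_X, eval_one,
      leg_eval_neg_one (n + 1), leg_eval_neg_one n] at e
    have hne : ((n : ℝ) + 2) ≠ 0 := by positivity
    have hp : ((-1 : ℝ)) ^ (n + 1) = -(-1) ^ n := by rw [pow_succ]; ring
    have hp2 : ((-1 : ℝ)) ^ (n + 2) = (-1) ^ n := by rw [pow_succ, pow_succ]; ring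
    rw [hp2]
    rw [hp] at e
    have : ((n : ℝ) + 2) * eval (-1) (Leg (n + 2)) = ((n : ℝ) + 2) * (-1) ^ n := by
      rw [e]; ring
    exact mul_left_cancel₀ hne this

noncomputable def aLeg (n : ℕ) : ℝ := (Leg n).eval 0

lemma aLeg_rec (n : ℕ) : ((n : ℝ) + 2) * aLeg (n + 2) = -(((n : ℝ) + 1) * aLeg n) := by
  have e := congrArg (eval 0) (leg_rec n)
  simp only [eval_mul, eval_add, eval_sub, eval_natCast, eval_ofNat, eval_X, zero_mul,
    mul_zero] at e
  simpa [aLeg] using e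

lemma dLeg_zero (n : ℕ) : (derivative (Leg (n + 1))).eval 0 = ((n : ℝ) + 1) * aLeg n := by
  have e := congrArg (eval 0) (legG n)
  simpa [aLeg] using e

lemma central : ∀ n : ℕ, ((n : ℝ) + 2) * (aLeg (n + 1)) ^ 2 + ((n : ℝ) + 1) * (aLeg n) ^ 2 ≤ 1
  | 0 => by norm_num [aLeg, Leg]
  | (n + 1) => by
    have ih := central n
    have h := aLeg_rec n
    have hsq : (((n : ℝ) + 2) * aLeg (n + 2)) ^ 2 = (((n : ℝ) + 1) * aLeg n) ^ 2 := by
      rw [h]; ring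
    have hn0 : (0 : ℝ) < (n : ℝ) + 2 := by positivity
    push_cast
    nlinarith [sq_nonneg (aLeg n), sq_nonneg (aLeg (n + 1)), sq_nonneg (aLeg (n + 2))]
noncomputable def Qp (k : ℕ) : Polynomial ℝ :=
  ((k : Polynomial ℝ) * ((k : Polynomial ℝ) + 1)) * (Leg k) ^ 2
    + (1 - X ^ 2) * (derivative (Leg k)) ^ 2

lemma dQp (k : ℕ) : derivative (Qp k) = 2 * X * (derivative (Leg k)) ^ 2 := by
  unfold Qp
  simp only [derivative_add, derivative_mul, derivative_pow, derivative_sub, derivative_one,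
    derivative_natCast, derivative_X, Nat.cast_ofNat, map_ofNat, zero_mul, mul_zero, zero_add,
    add_zero, mul_one, one_mul, zero_sub, pow_one]
  linear_combination (-2) * derivative (Leg k) * legODE k

lemma dHp (k : ℕ) : derivative ((1 - X ^ 2) * Qp k)
    = -(2 * ((k : Polynomial ℝ) * ((k : Polynomial ℝ) + 1))) * (X * (Leg k) ^ 2) := by
  have h := dQp k
  rw [derivative_mul, h]
  simp only [derivative_sub, derivative_one, derivative_pow, derivative_X, Nat.cast_ofNat,
    map_ofNat, mul_one, pow_one, zero_sub]
  unfold Qp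
  ring

lemma eval_le_right (P : Polynomial ℝ) {a b : ℝ} (hab : a ≤ b)
    (h : ∀ x ∈ Set.Icc a b, 0 ≤ (derivative P).eval x) :
    ∀ x ∈ Set.Icc a b, P.eval x ≤ P.eval b := by
  have mono : MonotoneOn (fun x => P.eval x) (Set.Icc a b) := by
    apply monotoneOn_of_deriv_nonneg (convex_Icc a b) ((Polynomial.continuous P).continuousOn)
    · exact fun x _ => (P.differentiable.differentiableAt).differentiableWithinAt
    · intro x hx
      rw [Polynomial.deriv]
      exact h x (Set.mem_Icc_of_Ioo (by rwa [interior_Icc] at hx))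
  exact fun x hx => mono hx (Set.right_mem_Icc.2 hab) hx.2

lemma eval_le_left (P : Polynomial ℝ) {a b : ℝ} (hab : a ≤ b)
    (h : ∀ x ∈ Set.Icc a b, (derivative P).eval x ≤ 0) :
    ∀ x ∈ Set.Icc a b, P.eval x ≤ P.eval a := by
  have anti : AntitoneOn (fun x => P.eval x) (Set.Icc a b) := by
    apply antitoneOn_of_deriv_nonpos (convex_Icc a b) ((Polynomial.continuous P).continuousOn)
    · exact fun x _ => (P.differentiable.differentiableAt).differentiableWithinAt
    · intro x hx
      rw [Polynomial.deriv]
      exact h x (Set.mem_Icc_of_Ioo (by rwa [interior_Icc] at hx))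
  exact fun x hx => anti (Set.left_mem_Icc.2 hab) hx hx.1

lemma Qp_le (k : ℕ) : ∀ x ∈ Set.Icc (-1 : ℝ) 1,
    (Qp k).eval x ≤ (k : ℝ) * ((k : ℝ) + 1) := by
  have hQ1 : (Qp k).eval 1 = (k : ℝ) * ((k : ℝ) + 1) := by
    simp [Qp, leg_eval_one]
  have hQm1 : (Qp k).eval (-1) = (k : ℝ) * ((k : ℝ) + 1) := by
    have hsq : ((-1:ℝ) ^ k) ^ 2 = 1 := by
      rw [← pow_mul, mul_comm, pow_mul]
      norm_num
    simp [Qp, leg_eval_neg_one, hsq]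
  intro x hx
  rcases le_total 0 x with h0 | h0
  · have := eval_le_right (Qp k) (zero_le_one) ?_ x ⟨h0, hx.2⟩
    · rwa [hQ1] at this
    · intro y hy
      rw [dQp]
      simp only [eval_mul, eval_ofNat, eval_X, eval_pow]
      nlinarith [hy.1, sq_nonneg ((derivative (Leg k)).eval y)]
  · have := eval_le_left (Qp k) (by norm_num : (-1:ℝ) ≤ 0) ?_ x ⟨hx.1, h0⟩
    · rwa [hQm1] at this
    · intro y hy
      rw [dQp]
      simp only [eval_mul, eval_ofNat, eval_X, eval_pow]
      have : y ≤ 0 := hy.2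
      nlinarith [sq_nonneg ((derivative (Leg k)).eval y)]

lemma Hp_le (m : ℕ) : ∀ x ∈ Set.Icc (-1 : ℝ) 1,
    ((1 - X ^ 2) * Qp (m + 1)).eval x ≤ ((m : ℝ) + 1) := by
  set k := m + 1 with hk
  have hQ0 : (Qp k).eval 0 ≤ (m : ℝ) + 1 := by
    have hd : (derivative (Leg (m + 1))).eval 0 = ((m : ℝ) + 1) * aLeg m := dLeg_zero m
    have hc := central m
    simp only [Qp, eval_add, eval_mul, eval_natCast, eval_one, eval_sub, eval_pow, eval_X, hk]
    push_cast
    rw [hd]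
    have : ((Leg (m+1)).eval 0) = aLeg (m + 1) := rfl
    rw [this]
    nlinarith [sq_nonneg (aLeg m), sq_nonneg (aLeg (m+1)), (by positivity : (0:ℝ) ≤ (m:ℝ))]
  have hH0 : ((1 - X ^ 2) * Qp k).eval 0 ≤ (m : ℝ) + 1 := by
    simpa using hQ0
  intro x hx
  rcases le_total 0 x with h0 | h0
  · have := eval_le_left ((1 - X ^ 2) * Qp k) (zero_le_one) ?_ x ⟨h0, hx.2⟩
    · exact le_trans this hH0
    · intro y hy
      rw [dHp]
      simp only [eval_mul, eval_neg, eval_ofNat, eval_X, eval_pow, eval_add, eval_natCast, eval_one]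
      have h1 : (0:ℝ) ≤ y := hy.1
      have h2 : (0:ℝ) ≤ (k:ℝ) * ((k:ℝ) + 1) := by positivity
      nlinarith [mul_nonneg h2 (mul_nonneg h1 (sq_nonneg ((Leg k).eval y)))]
  · have := eval_le_right ((1 - X ^ 2) * Qp k) (by norm_num : (-1:ℝ) ≤ 0) ?_ x ⟨hx.1, h0⟩
    · exact le_trans this hH0
    · intro y hy
      rw [dHp]
      simp only [eval_mul, eval_neg, eval_ofNat, eval_X, eval_pow, eval_add, eval_natCast, eval_one]
      have h1 : y ≤ 0 := hy.2
      have h2 : (0:ℝ) ≤ (k:ℝ) * ((k:ℝ) + 1) := by positivity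
      nlinarith [mul_nonneg h2 (mul_nonneg (neg_nonneg.2 h1) (sq_nonneg ((Leg k).eval y)))]

lemma legSq_le (m : ℕ) : ∀ x ∈ Set.Icc (-1 : ℝ) 1,
    ((m : ℝ) + 2) * ((1 - x ^ 2) * ((Leg (m + 1)).eval x) ^ 2) ≤ 1 := by
  intro x hx
  have h := Hp_le m x hx
  simp only [eval_mul, eval_sub, eval_one, eval_pow, eval_X, Qp, eval_add, eval_natCast] at h
  push_cast at h
  have h1 : 0 ≤ 1 - x ^ 2 := by nlinarith [hx.1, hx.2]
  have h2 : (0:ℝ) < (m : ℝ) + 1 := by positivity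
  have t1 : 0 ≤ (1 - x^2) * ((1 - x^2) * ((derivative (Leg (m+1))).eval x)^2) :=
    mul_nonneg h1 (mul_nonneg h1 (sq_nonneg _))
  have e1 : ((m:ℝ)+1) * (((m:ℝ)+2) * ((1 - x^2) * ((Leg (m+1)).eval x)^2))
      ≤ ((m:ℝ)+1) * 1 := by nlinarith [h, t1]
  exact (mul_le_mul_iff_right₀ h2).mp e1

lemma dlegSq_le (m : ℕ) : ∀ x ∈ Set.Icc (-1 : ℝ) 1,
    (1 - x ^ 2) ^ 2 * ((derivative (Leg (m + 1))).eval x) ^ 2 ≤ (m : ℝ) + 1 := by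
  intro x hx
  have h := Hp_le m x hx
  simp only [eval_mul, eval_sub, eval_one, eval_pow, eval_X, Qp, eval_add, eval_natCast] at h
  push_cast at h
  have h1 : 0 ≤ 1 - x ^ 2 := by nlinarith [hx.1, hx.2]
  nlinarith [h, mul_nonneg h1 (mul_nonneg
    (by positivity : (0:ℝ) ≤ ((m:ℝ)+1)*((m:ℝ)+1+1)) (sq_nonneg ((Leg (m+1)).eval x)))]
noncomputable def Sfun (m : ℕ) (x : ℝ) : ℝ :=
  (1 / (2 * (m : ℝ) + 5)) * ((1 / (2 * (m : ℝ) + 7)) * ((Leg (m + 4) - Leg (m + 2)).eval x)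
    - (1 / (2 * (m : ℝ) + 3)) * ((Leg (m + 2) - Leg m).eval x))

noncomputable def Rfun (m : ℕ) (x : ℝ) : ℝ :=
  (1 / (2 * (m : ℝ) + 5)) * ((Leg (m + 3) - Leg (m + 1)).eval x)

lemma Sfun_hasDeriv (m : ℕ) (x : ℝ) : HasDerivAt (Sfun m) (Rfun m x) x := by
  have hp1 : derivative (Leg (m + 4) - Leg (m + 2)) = (2 * (m : Polynomial ℝ) + 7) * Leg (m + 3) := by
    have := pearson (m + 2)
    push_cast at this
    rw [derivative_sub]
    linear_combination this
  have hp2 : derivative (Leg (m + 2) - Leg m) = (2 * (m : Polynomial ℝ) + 3) * Leg (m + 1) := by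
    have := pearson m
    rw [derivative_sub]
    linear_combination this
  have h1 := ((Leg (m + 4) - Leg (m + 2)).hasDerivAt x).const_mul (1 / (2 * (m : ℝ) + 7))
  have h2 := ((Leg (m + 2) - Leg m).hasDerivAt x).const_mul (1 / (2 * (m : ℝ) + 3))
  have h3 := ((h1.sub h2).const_mul (1 / (2 * (m : ℝ) + 5)))
  refine HasDerivAt.congr_deriv h3 ?_
  rw [hp1, hp2]
  simp only [eval_mul, eval_add, eval_ofNat, eval_natCast, Rfun, eval_sub]
  have e7 : (2 * (m : ℝ) + 7) ≠ 0 := by positivity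
  have e3 : (2 * (m : ℝ) + 3) ≠ 0 := by positivity
  field_simp
  all_goals first | ring1 | tauto

lemma Sfun_one (m : ℕ) : Sfun m 1 = 0 := by
  simp [Sfun, leg_eval_one]

lemma Sfun_neg_one (m : ℕ) : Sfun m (-1) = 0 := by
  have h4 : ((-1:ℝ)) ^ (m + 4) = (-1) ^ m := by rw [pow_add]; norm_num
  have h2 : ((-1:ℝ)) ^ (m + 2) = (-1) ^ m := by rw [pow_add]; norm_num
  simp [Sfun, leg_eval_neg_one, h4, h2]

lemma Rfun_sq_le (m : ℕ) : ∀ u ∈ Set.Icc (-1 : ℝ) 1,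
    (Rfun m u) ^ 2 ≤ 1 / (((m : ℝ) + 2) * ((m : ℝ) + 3) ^ 2) := by
  intro u hu
  have hf := congrArg (eval u) (formC (m + 1))
  push_cast at hf
  simp only [eval_mul, eval_add, eval_sub, eval_ofNat, eval_natCast, eval_pow, eval_X,
    eval_one] at hf
  have e5 : (2 * (m : ℝ) + 5) ≠ 0 := by positivity
  have e23 : (((m : ℝ) + 2) * ((m : ℝ) + 3)) ≠ 0 := by positivity
  have hr : Rfun m u = (u ^ 2 - 1) * (derivative (Leg (m + 2))).eval u
      / (((m : ℝ) + 2) * ((m : ℝ) + 3)) := by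
    rw [Rfun]
    rw [eq_div_iff e23]
    simp only [eval_sub]
    field_simp
    linear_combination -hf
  have hd := dlegSq_le (m + 1) u hu
  push_cast at hd
  rw [hr, div_pow]
  rw [div_le_div_iff₀ (by positivity) (by positivity)]
  have h1 : ((u ^ 2 - 1) * (derivative (Leg (m + 2))).eval u) ^ 2
      = (1 - u ^ 2) ^ 2 * ((derivative (Leg (m + 2))).eval u) ^ 2 := by ring
  rw [h1]
  nlinarith [hd, sq_nonneg (((m:ℝ)+2) * ((m:ℝ)+3)), (by positivity : (0:ℝ) < ((m:ℝ)+2)),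
    (by positivity : (0:ℝ) < ((m:ℝ)+3)^2)]
lemma LegE0 : ∀ x : ℝ, eval x (Leg 0) = 1 := by intro x; simp [Leg]
lemma LegE1 : ∀ x : ℝ, eval x (Leg 1) = x := by intro x; simp [Leg]
lemma LegE2 : ∀ x : ℝ, eval x (Leg 2) = (3 * x ^ 2 - 1) / 2 := by
  intro x
  conv_lhs => rw [show (2 : ℕ) = 0 + 2 from rfl, Leg]
  simp [LegE0, LegE1]
  ring
lemma LegE3 : ∀ x : ℝ, eval x (Leg 3) = (5 * x ^ 3 - 3 * x) / 2 := by
  intro x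
  conv_lhs => rw [show (3 : ℕ) = 1 + 2 from rfl, Leg]
  simp [LegE1, LegE2]
  ring
lemma LegE4 : ∀ x : ℝ, eval x (Leg 4) = (35 * x ^ 4 - 30 * x ^ 2 + 3) / 8 := by
  intro x
  conv_lhs => rw [show (4 : ℕ) = 2 + 2 from rfl, Leg]
  simp [LegE2, LegE3]
  ring
lemma LegE5 : ∀ x : ℝ, eval x (Leg 5) = (63 * x ^ 5 - 70 * x ^ 3 + 15 * x) / 8 := by
  intro x
  conv_lhs => rw [show (5 : ℕ) = 3 + 2 from rfl, Leg]
  simp [LegE3, LegE4]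
  ring

lemma SfunE0 : ∀ x : ℝ, Sfun 0 x = (x ^ 2 - 1) ^ 2 / 8 := by
  intro x
  simp [Sfun, LegE0, LegE2, LegE4]
  ring
lemma SfunE1 : ∀ x : ℝ, Sfun 1 x = x * (x ^ 2 - 1) ^ 2 / 8 := by
  intro x
  simp [Sfun, LegE1, LegE3, LegE5]
  ring
lemma supS0 : ∀ x ∈ Set.Icc (-1:ℝ) 1, |Sfun 0 x| ≤ 4 / (2 * ((0:ℕ):ℝ) + 5) ^ 2 := by
  intro x hx
  rw [SfunE0]
  rw [abs_le]
  norm_num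
  have h1 : (0:ℝ) ≤ 1 - x ^ 2 := by nlinarith [hx.1, hx.2]
  constructor <;> nlinarith [h1, sq_nonneg x, mul_nonneg h1 (sq_nonneg x)]

lemma supS1 : ∀ x ∈ Set.Icc (-1:ℝ) 1, |Sfun 1 x| ≤ 4 / (2 * ((1:ℕ):ℝ) + 5) ^ 2 := by
  intro x hx
  have ht1 : x ^ 2 ≤ 1 := by nlinarith [hx.1, hx.2]
  have h1t : (0:ℝ) ≤ 1 - x ^ 2 := by linarith
  have h14 : x ^ 2 * (1 - x ^ 2) ≤ 1 / 4 := by nlinarith [sq_nonneg (x ^ 2 - 1 / 2)]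
  have ht3 : (1 - x ^ 2) ^ 3 ≤ 1 := by nlinarith [sq_nonneg x, pow_nonneg h1t 2, sq_nonneg (x*(1-x^2))]
  have key : x ^ 2 * (1 - x ^ 2) ^ 4 ≤ 1 / 4 := by
    nlinarith [mul_le_mul h14 ht3 (pow_nonneg h1t 3) (by norm_num : (0:ℝ) ≤ 1/4),
      mul_nonneg (sq_nonneg x) h1t]
  rw [SfunE1]
  apply abs_le_of_sq_le_sq _ (by positivity)
  rw [div_pow]
  norm_num
  nlinarith [key]

set_option maxHeartbeats 1000000 in
lemma supS_gen (m : ℕ) (hm : 2 ≤ m) : ∀ x ∈ Set.Icc (-1:ℝ) 1,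
    |Sfun m x| ≤ 4 / (2 * (m:ℝ) + 5) ^ 2 := by
  intro x hx
  have hmr : (2:ℝ) ≤ (m:ℝ) := by exact_mod_cast hm
  have hd0 : (0:ℝ) ≤ 1 - x ^ 2 := by nlinarith [hx.1, hx.2]
  by_cases hcase : 6 / (5 * ((m:ℝ) + 1)) ≤ 1 - x ^ 2
  · -- region A : use pointwise bounds on the three Legendre evals
    set s : ℝ := Real.sqrt (5/6) with hs
    have hs0 : 0 ≤ s := Real.sqrt_nonneg _
    have hs2 : s ^ 2 = 5 / 6 := Real.sq_sqrt (by norm_num)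
    -- |Leg k eval| ≤ s for k = m, m+2, m+4
    have key : ∀ k : ℕ, ((m:ℝ) + 1) * ((1 - x ^ 2) * ((Leg k).eval x) ^ 2) ≤ 1 →
        |(Leg k).eval x| ≤ s := by
      intro k hk
      apply abs_le_of_sq_le_sq _ hs0
      rw [hs2]
      have h5 : (0:ℝ) < 5 * ((m:ℝ) + 1) := by positivity
      have h6 : (6 / (5 * ((m:ℝ) + 1))) * (((m:ℝ)+1) * ((Leg k).eval x) ^ 2)
          ≤ (1 - x ^ 2) * (((m:ℝ)+1) * ((Leg k).eval x) ^ 2) := by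
        apply mul_le_mul_of_nonneg_right hcase (by positivity)
      have h7 : (6 / (5 * ((m:ℝ) + 1))) * (((m:ℝ)+1) * ((Leg k).eval x) ^ 2)
          = (6/5) * ((Leg k).eval x) ^ 2 := by field_simp
      nlinarith [h6, h7, hk]
    have hLm : |(Leg m).eval x| ≤ s := by
      apply key
      obtain ⟨j, rfl⟩ : ∃ j, m = j + 1 := ⟨m - 1, by omega⟩
      have := legSq_le j x hx
      push_cast at this ⊢
      linarith
    have hLm2 : |(Leg (m+2)).eval x| ≤ s := by
      apply key
      have := legSq_le (m+1) x hx
      push_cast at this ⊢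
      nlinarith [mul_nonneg hd0 (sq_nonneg ((Leg (m+2)).eval x))]
    have hLm4 : |(Leg (m+4)).eval x| ≤ s := by
      apply key
      have := legSq_le (m+3) x hx
      push_cast at this ⊢
      nlinarith [mul_nonneg hd0 (sq_nonneg ((Leg (m+4)).eval x))]
    -- triangle inequality
    have ha : (0:ℝ) < 2 * (m:ℝ) + 3 := by positivity
    have hb : (0:ℝ) < 2 * (m:ℝ) + 5 := by positivity
    have hc : (0:ℝ) < 2 * (m:ℝ) + 7 := by positivity
    have tri : |Sfun m x| ≤ (1/(2*(m:ℝ)+5)) * ((1/(2*(m:ℝ)+7)) * (2*s)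
        + (1/(2*(m:ℝ)+3)) * (2*s)) := by
      rw [Sfun]
      have t1 : |(Leg (m+4) - Leg (m+2)).eval x| ≤ 2 * s := by
        rw [eval_sub]
        have := abs_sub ((Leg (m+4)).eval x) ((Leg (m+2)).eval x)
        linarith
      have t2 : |(Leg (m+2) - Leg m).eval x| ≤ 2 * s := by
        rw [eval_sub]
        have := abs_sub ((Leg (m+2)).eval x) ((Leg m).eval x)
        linarith
      rw [abs_mul, abs_of_pos (by positivity : (0:ℝ) < 1/(2*(m:ℝ)+5))]
      apply mul_le_mul_of_nonneg_left _ (by positivity)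
      calc |1/(2*(m:ℝ)+7) * ((Leg (m+4) - Leg (m+2)).eval x)
            - 1/(2*(m:ℝ)+3) * ((Leg (m+2) - Leg m).eval x)|
          ≤ |1/(2*(m:ℝ)+7) * ((Leg (m+4) - Leg (m+2)).eval x)|
            + |1/(2*(m:ℝ)+3) * ((Leg (m+2) - Leg m).eval x)| := abs_sub _ _
        _ ≤ 1/(2*(m:ℝ)+7) * (2*s) + 1/(2*(m:ℝ)+3) * (2*s) := by
            rw [abs_mul, abs_mul, abs_of_pos (by positivity : (0:ℝ) < 1/(2*(m:ℝ)+7)),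
              abs_of_pos (by positivity : (0:ℝ) < 1/(2*(m:ℝ)+3))]
            gcongr
    refine tri.trans ?_
    have hkey1 : s * (2*(m:ℝ)+5)^2 ≤ (2*(m:ℝ)+7) * (2*(m:ℝ)+3) := by
      have hw : (81:ℝ) ≤ (2*(m:ℝ)+5)^2 := by nlinarith
      have hsq : (s * (2*(m:ℝ)+5)^2)^2 ≤ ((2*(m:ℝ)+7) * (2*(m:ℝ)+3))^2 := by
        have e : ((2*(m:ℝ)+7) * (2*(m:ℝ)+3)) = (2*(m:ℝ)+5)^2 - 4 := by ring
        rw [e, mul_pow, hs2]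
        nlinarith [hw, mul_nonneg (sub_nonneg.2 hw) (by positivity : (0:ℝ) ≤ (2*(m:ℝ)+5)^2)]
      have := abs_le_of_sq_le_sq hsq (by positivity)
      rwa [abs_of_nonneg (by positivity)] at this
    have he : (1/(2*(m:ℝ)+5)) * ((1/(2*(m:ℝ)+7)) * (2*s) + (1/(2*(m:ℝ)+3)) * (2*s))
        = 4*s / ((2*(m:ℝ)+7) * (2*(m:ℝ)+3)) := by
      field_simp
      ring
    rw [he, div_le_div_iff₀ (by positivity) (by positivity)]
    nlinarith [hkey1, hs0, hmr]
  · -- region B : MVT from the nearest endpoint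
    push_neg at hcase
    set c : ℝ := Real.sqrt (1/(((m:ℝ)+2) * ((m:ℝ)+3)^2)) with hcdef
    have hc0 : 0 ≤ c := Real.sqrt_nonneg _
    have hc2 : c ^ 2 = 1/(((m:ℝ)+2) * ((m:ℝ)+3)^2) := Real.sq_sqrt (by positivity)
    have hbound : ∀ u ∈ Set.Icc (-1:ℝ) 1, ‖Rfun m u‖ ≤ c := by
      intro u hu
      rw [Real.norm_eq_abs]
      apply abs_le_of_sq_le_sq _ hc0
      rw [hc2]
      exact Rfun_sq_le m u hu
    have hder : ∀ u ∈ Set.Icc (-1:ℝ) 1, HasDerivWithinAt (Sfun m) (Rfun m u) (Set.Icc (-1:ℝ) 1) u :=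
      fun u _ => (Sfun_hasDeriv m u).hasDerivWithinAt
    have hmvt := fun (y : ℝ) (hy : y ∈ Set.Icc (-1:ℝ) 1) (z : ℝ) (hz : z ∈ Set.Icc (-1:ℝ) 1) =>
      (convex_Icc (-1:ℝ) 1).norm_image_sub_le_of_norm_hasDerivWithin_le hder hbound hy hz
    have hpoly : 36 * (2*(m:ℝ)+5)^4 ≤ 400 * ((m:ℝ)+1)^2 * (((m:ℝ)+2) * ((m:ℝ)+3)^2) := by
      have hp : (0:ℝ) ≤ (m:ℝ) - 2 := by linarith
      nlinarith [hp, pow_nonneg hp 2, pow_nonneg hp 3, pow_nonneg hp 4, pow_nonneg hp 5]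
    have hfinal : c * (6 / (5 * ((m:ℝ) + 1))) ≤ 4 / (2*(m:ℝ)+5)^2 := by
      have hsq : (c * (6 / (5 * ((m:ℝ) + 1))))^2 ≤ (4 / (2*(m:ℝ)+5)^2)^2 := by
        rw [mul_pow, hc2, div_pow, div_pow, div_mul_div_comm,
          div_le_div_iff₀ (by positivity) (by positivity)]
        nlinarith [hpoly]
      have := abs_le_of_sq_le_sq hsq (by positivity)
      rwa [abs_of_nonneg (by positivity)] at this
    rcases le_total 0 x with h0 | h0
    · have h1x : 1 - x ≤ 1 - x ^ 2 := by nlinarith [hx.2]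
      have hm1 : (1:ℝ) ∈ Set.Icc (-1:ℝ) 1 := by norm_num
      have := hmvt 1 hm1 x hx
      rw [Sfun_one, sub_zero, Real.norm_eq_abs, Real.norm_eq_abs] at this
      have hax : |x - 1| = 1 - x := by rw [abs_sub_comm, abs_of_nonneg (by linarith [hx.2])]
      rw [hax] at this
      calc |Sfun m x| ≤ c * (1 - x) := this
        _ ≤ c * (6 / (5 * ((m:ℝ) + 1))) := by
            apply mul_le_mul_of_nonneg_left _ hc0
            linarith
        _ ≤ 4 / (2*(m:ℝ)+5)^2 := hfinal
    · have h1x : 1 + x ≤ 1 - x ^ 2 := by nlinarith [hx.1]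
      have hm1 : (-1:ℝ) ∈ Set.Icc (-1:ℝ) 1 := by norm_num
      have := hmvt (-1) hm1 x hx
      rw [Sfun_neg_one, sub_zero, Real.norm_eq_abs, Real.norm_eq_abs] at this
      have hax : |x - (-1)| = 1 + x := by rw [abs_of_nonneg (by linarith [hx.1])]; ring
      rw [hax] at this
      calc |Sfun m x| ≤ c * (1 + x) := this
        _ ≤ c * (6 / (5 * ((m:ℝ) + 1))) := by
            apply mul_le_mul_of_nonneg_left _ hc0
            linarith
        _ ≤ 4 / (2*(m:ℝ)+5)^2 := hfinal

lemma supS (m : ℕ) : ∀ x ∈ Set.Icc (-1:ℝ) 1, |Sfun m x| ≤ 4 / (2 * (m:ℝ) + 5) ^ 2 := by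
  match m with
  | 0 => exact supS0
  | 1 => exact supS1
  | (j+2) => exact supS_gen (j+2) (by omega)
set_option maxHeartbeats 1000000 in
theorem stmt13 (T : ℝ) (hT : 0 < T) (f : ℝ → ℝ)
    (hf : ContDiffOn ℝ 2 f (Set.Icc 0 T)) (n : ℕ) (hn : 2 ≤ n) :
    |∫ t in (0:ℝ)..T, f t * legendre n (2 * t / T - 1)| ≤
      4 * (T / (4 * (n : ℝ) + 2)) ^ 2 * ∫ t in (0:ℝ)..T, |deriv (deriv f) t| := by
  obtain ⟨m, rfl⟩ : ∃ m, n = m + 2 := ⟨n - 2, by omega⟩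
  have hTne : T ≠ 0 := hT.ne'
  -- the scaled Legendre-type functions on [0, T]
  set pnF : ℝ → ℝ := fun t => eval (2 * t / T - 1) (Leg (m + 2)) with hpnF
  set rhoF : ℝ → ℝ := fun t => (T / 2) * Rfun m (2 * t / T - 1) with hrhoF
  set sigF : ℝ → ℝ := fun t => (T / 2) ^ 2 * Sfun m (2 * t / T - 1) with hsigF
  have hxt : ∀ t : ℝ, HasDerivAt (fun u : ℝ => 2 * u / T - 1) (2 / T) t := by
    intro t
    have heq : (fun u : ℝ => 2 * u / T - 1) = (fun u : ℝ => (2 / T) * u - 1) := by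
      funext u; ring
    rw [heq]
    simpa using ((hasDerivAt_id t).const_mul (2 / T)).sub_const 1
  have hR : ∀ x : ℝ, HasDerivAt (Rfun m) (eval x (Leg (m + 2))) x := by
    intro x
    have hp : derivative (Leg (m + 3) - Leg (m + 1))
        = (2 * (m : Polynomial ℝ) + 5) * Leg (m + 2) := by
      have := pearson (m + 1)
      push_cast at this
      rw [derivative_sub]
      linear_combination this
    have h := ((Leg (m + 3) - Leg (m + 1)).hasDerivAt x).const_mul (1 / (2 * (m : ℝ) + 5))
    have e5 : (2 * (m : ℝ) + 5) ≠ 0 := by positivity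
    have : HasDerivAt (Rfun m)
        (1 / (2 * (m : ℝ) + 5) * eval x (derivative (Leg (m + 3) - Leg (m + 1)))) x := h
    convert this using 1
    rw [hp]
    simp only [eval_mul, eval_add, eval_ofNat, eval_natCast]
    field_simp
  have hrho : ∀ t : ℝ, HasDerivAt rhoF (pnF t) t := by
    intro t
    have h := (((hR (2 * t / T - 1)).comp t (hxt t)).const_mul (T / 2))
    refine HasDerivAt.congr_deriv h ?_
    simp only [hpnF]
    field_simp
  have hsig : ∀ t : ℝ, HasDerivAt sigF (rhoF t) t := by
    intro t
    have h := (((Sfun_hasDeriv m (2 * t / T - 1)).comp t (hxt t)).const_mul ((T / 2) ^ 2))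
    refine HasDerivAt.congr_deriv h ?_
    simp only [hrhoF, Function.comp]
    field_simp
  -- continuity
  have hxtc : Continuous (fun u : ℝ => 2 * u / T - 1) := by
    apply Continuous.sub _ continuous_const
    exact (continuous_const.mul continuous_id).div_const T
  have hpnc : Continuous pnF := (Polynomial.continuous (Leg (m + 2))).comp hxtc
  have hrhoc : Continuous rhoF := continuous_iff_continuousAt.2 fun t => (hrho t).continuousAt
  have hsigc : Continuous sigF := continuous_iff_continuousAt.2 fun t => (hsig t).continuousAt
  -- boundary values
  have hxT : 2 * T / T - 1 = 1 := by field_simp; norm_num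
  have hx0 : 2 * 0 / T - 1 = -1 := by simp
  have hrho0 : rhoF 0 = 0 := by
    have : Rfun m (-1) = 0 := by
      have h3 : ((-1:ℝ)) ^ (m + 3) = (-1) ^ (m + 1) := by rw [pow_add, pow_add]; norm_num
      simp [Rfun, leg_eval_neg_one, h3]
    simp [hrhoF, hx0, this]
  have hrhoT : rhoF T = 0 := by
    have : Rfun m 1 = 0 := by simp [Rfun, leg_eval_one]
    simp [hrhoF, hxT, this]
  have hsig0 : sigF 0 = 0 := by simp [hsigF, hx0, Sfun_neg_one]
  have hsigT : sigF T = 0 := by simp [hsigF, hxT, Sfun_one]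
  -- derivatives of f within [0, T]
  have hu : UniqueDiffOn ℝ (Set.Icc (0:ℝ) T) := uniqueDiffOn_Icc hT
  set f1 : ℝ → ℝ := derivWithin f (Set.Icc 0 T) with hf1def
  set f2 : ℝ → ℝ := derivWithin f1 (Set.Icc 0 T) with hf2def
  have hf1cd : ContDiffOn ℝ 1 f1 (Set.Icc 0 T) := hf.derivWithin hu (by norm_num)
  have hfc : ContinuousOn f (Set.Icc 0 T) := hf.continuousOn
  have hf1c : ContinuousOn f1 (Set.Icc 0 T) := hf1cd.continuousOn
  have hf2c : ContinuousOn f2 (Set.Icc 0 T) := hf1cd.continuousOn_derivWithin hu le_rfl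
  have hfd : DifferentiableOn ℝ f (Set.Icc 0 T) := hf.differentiableOn (by norm_num)
  have hf1d : DifferentiableOn ℝ f1 (Set.Icc 0 T) := hf1cd.differentiableOn (by norm_num)
  have hfD : ∀ t ∈ Set.Ioo (0:ℝ) T, HasDerivAt f (f1 t) t := fun t ht =>
    ((hfd t (Set.Ioo_subset_Icc_self ht)).hasDerivWithinAt).hasDerivAt
      (Icc_mem_nhds ht.1 ht.2)
  have hf1D : ∀ t ∈ Set.Ioo (0:ℝ) T, HasDerivAt f1 (f2 t) t := fun t ht =>
    ((hf1d t (Set.Ioo_subset_Icc_self ht)).hasDerivWithinAt).hasDerivAt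
      (Icc_mem_nhds ht.1 ht.2)
  have hIcc : Set.uIcc (0:ℝ) T = Set.Icc 0 T := Set.uIcc_of_le hT.le
  -- interval integrability
  have int_fpn : IntervalIntegrable (fun t => f t * pnF t) volume 0 T := by
    apply ContinuousOn.intervalIntegrable
    rw [hIcc]; exact hfc.mul hpnc.continuousOn
  have int_f1rho : IntervalIntegrable (fun t => f1 t * rhoF t) volume 0 T := by
    apply ContinuousOn.intervalIntegrable
    rw [hIcc]; exact hf1c.mul hrhoc.continuousOn
  have int_f2sig : IntervalIntegrable (fun t => f2 t * sigF t) volume 0 T := by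
    apply ContinuousOn.intervalIntegrable
    rw [hIcc]; exact hf2c.mul hsigc.continuousOn
  -- first integration by parts
  have ftc1 : (∫ t in (0:ℝ)..T, (f1 t * rhoF t + f t * pnF t)) = 0 := by
    have := intervalIntegral.integral_eq_sub_of_hasDeriv_right_of_le hT.le
      (f := fun t => f t * rhoF t) (f' := fun t => f1 t * rhoF t + f t * pnF t)
      (hfc.mul hrhoc.continuousOn)
      (fun t ht => ((hfD t ht).mul (hrho t)).hasDerivWithinAt)
      (int_f1rho.add int_fpn)
    rw [this]
    show f T * rhoF T - f 0 * rhoF 0 = 0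
    rw [hrhoT, hrho0, mul_zero, mul_zero, sub_zero]
  have ftc2 : (∫ t in (0:ℝ)..T, (f2 t * sigF t + f1 t * rhoF t)) = 0 := by
    have := intervalIntegral.integral_eq_sub_of_hasDeriv_right_of_le hT.le
      (f := fun t => f1 t * sigF t) (f' := fun t => f2 t * sigF t + f1 t * rhoF t)
      (hf1c.mul hsigc.continuousOn)
      (fun t ht => ((hf1D t ht).mul (hsig t)).hasDerivWithinAt)
      (int_f2sig.add int_f1rho)
    rw [this]
    show f1 T * sigF T - f1 0 * sigF 0 = 0
    rw [hsigT, hsig0, mul_zero, mul_zero, sub_zero]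
  have key : (∫ t in (0:ℝ)..T, f t * pnF t) = ∫ t in (0:ℝ)..T, f2 t * sigF t := by
    rw [intervalIntegral.integral_add int_f1rho int_fpn] at ftc1
    rw [intervalIntegral.integral_add int_f2sig int_f1rho] at ftc2
    linarith
  -- the uniform bound on sigF
  have hgoalcast : ((m + 2 : ℕ) : ℝ) = (m : ℝ) + 2 := by push_cast; ring
  rw [hgoalcast]
  set M : ℝ := 4 * (T / (4 * ((m:ℝ) + 2) + 2)) ^ 2 with hM
  have hM' : M = (T / 2) ^ 2 * (4 / (2 * (m:ℝ) + 5) ^ 2) := by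
    rw [hM]
    have h25 : (4 * ((m:ℝ) + 2) + 2) = 2 * (2 * (m:ℝ) + 5) := by ring
    rw [h25]
    field_simp
  have hsig_bound : ∀ t ∈ Set.Icc (0:ℝ) T, |sigF t| ≤ M := by
    intro t ht
    have hmem : 2 * t / T - 1 ∈ Set.Icc (-1:ℝ) 1 := by
      constructor
      · have : 0 ≤ 2 * t / T := div_nonneg (by linarith [ht.1]) hT.le
        linarith
      · have h1 : 2 * t / T ≤ 2 := by
          rw [div_le_iff₀ hT]
          linarith [ht.2]
        linarith
    have hss := supS m (2 * t / T - 1) hmem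
    rw [hsigF, hM']
    simp only
    rw [abs_mul, abs_of_nonneg (by positivity : (0:ℝ) ≤ (T/2)^2)]
    exact mul_le_mul_of_nonneg_left hss (by positivity)
  -- final comparison
  have habs : |∫ t in (0:ℝ)..T, f2 t * sigF t| ≤ M * ∫ t in (0:ℝ)..T, |f2 t| := by
    have h1 := intervalIntegral.abs_integral_le_integral_abs (μ := volume)
      (f := fun t => f2 t * sigF t) hT.le
    have int_abs : IntervalIntegrable (fun t => |f2 t * sigF t|) volume 0 T := int_f2sig.abs
    have int_Mabs : IntervalIntegrable (fun t => M * |f2 t|) volume 0 T := by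
      apply ContinuousOn.intervalIntegrable
      rw [hIcc]
      exact continuousOn_const.mul hf2c.abs
    have h2 : (∫ t in (0:ℝ)..T, |f2 t * sigF t|) ≤ ∫ t in (0:ℝ)..T, M * |f2 t| := by
      apply intervalIntegral.integral_mono_on hT.le int_abs int_Mabs
      intro t ht
      rw [abs_mul]
      calc |f2 t| * |sigF t| ≤ |f2 t| * M :=
            mul_le_mul_of_nonneg_left (hsig_bound t ht) (abs_nonneg _)
        _ = M * |f2 t| := mul_comm _ _
    rw [intervalIntegral.integral_const_mul] at h2
    exact h1.trans h2
  have hdd : ∀ t ∈ Set.Ioo (0:ℝ) T, deriv (deriv f) t = f2 t := by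
    intro t ht
    have h1 : Set.EqOn (deriv f) f1 (Set.Ioo 0 T) := fun u hu => (hfD u hu).deriv
    have h2 : deriv f =ᶠ[nhds t] f1 := Filter.eventuallyEq_of_mem (isOpen_Ioo.mem_nhds ht) h1
    rw [h2.deriv_eq]
    exact (hf1D t ht).deriv
  have hcong : (∫ t in (0:ℝ)..T, |deriv (deriv f) t|) = ∫ t in (0:ℝ)..T, |f2 t| := by
    apply intervalIntegral.integral_congr_ae
    have hTae : ∀ᵐ (t:ℝ) ∂volume, t ≠ T := by
      have hs : {a : ℝ | ¬ a ≠ T} = {T} := by ext a; simp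
      rw [MeasureTheory.ae_iff, hs]
      exact measure_singleton T
    filter_upwards [hTae] with t htT hmem
    rw [Set.uIoc_of_le hT.le] at hmem
    rw [hdd t ⟨hmem.1, lt_of_le_of_ne hmem.2 htT⟩]
  calc |∫ t in (0:ℝ)..T, f t * legendre (m+2) (2 * t / T - 1)|
      = |∫ t in (0:ℝ)..T, f t * pnF t| := by
        congr 1
        apply intervalIntegral.integral_congr
        intro t _
        rw [hpnF]
        simp only [leg_eval]
    _ = |∫ t in (0:ℝ)..T, f2 t * sigF t| := by rw [key]
    _ ≤ M * ∫ t in (0:ℝ)..T, |f2 t| := habs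
    _ = M * ∫ t in (0:ℝ)..T, |deriv (deriv f) t| := by rw [hcong]
end
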